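/- arXiv:0704.0091 — 2 statements merged into one kernel-verified Lean document; each statement's English description precedes it below -/
import Mathlib

section
/- If G is a nontrivial group with exactly two conjugacy classes and |G| > 2, then G is torsion-free. -/
/-- A nontrivial group with exactly two conjugacy classes and more than two
elements is torsion-free. -/
theorem torsionFree_of_two_conjugacy_classes
    (G : Type*) [Group G] [Nontrivial G]
    (h : Nat.card (ConjClasses G) = 2)
    (hcard : ∃ a b c : G, a ≠ b ∧ a ≠ c ∧ b ≠ c) :
    ∀ g : G, g ≠ 1 → orderOf g = 0 := by
  -- any two nontrivial elements are conjugate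
  have hconj : ∀ a b : G, a ≠ 1 → b ≠ 1 → IsConj a b := by
    intro a b ha hb
    obtain ⟨y, -, hy⟩ := (Nat.card_eq_two_iff' (ConjClasses.mk (1 : G))).mp h
    have hma : ConjClasses.mk a = y := hy _ (by
      simp only [ne_eq, ConjClasses.mk_eq_mk_iff_isConj, isConj_one_left]; exact ha)
    have hmb : ConjClasses.mk b = y := hy _ (by
      simp only [ne_eq, ConjClasses.mk_eq_mk_iff_isConj, isConj_one_left]; exact hb)
    exact ConjClasses.mk_eq_mk_iff_isConj.mp (hma.trans hmb.symm)
  have horder : ∀ a b : G, IsConj a b → orderOf a = orderOf b := by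
    rintro a b ⟨c, hc⟩
    exact SemiconjBy.orderOf_eq _ hc
  intro g hg
  by_contra hn
  -- there is a prime p dividing orderOf g; x = g ^ (orderOf g / p) has order p
  obtain ⟨p, hp, hdvd⟩ := Nat.exists_prime_and_dvd
    (fun h1 => hg (orderOf_eq_one_iff.mp h1))
  set x : G := g ^ (orderOf g / p) with hxdef
  have hxp : orderOf x = p := orderOf_pow_orderOf_div hn hdvd
  have hx1 : x ≠ 1 := by
    intro hh
    rw [hh, orderOf_one] at hxp
    exact hp.ne_one hxp.symm
  -- every nontrivial element has order p
  have hordall : ∀ a : G, a ≠ 1 → orderOf a = p := by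
    intro a ha
    rw [horder a x (hconj a x ha hx1), hxp]
  by_cases hp2 : p = 2
  · -- exponent 2: the group is abelian, so all classes are singletons
    have hsq : ∀ a : G, a * a = 1 := by
      intro a
      by_cases ha : a = 1
      · rw [ha, mul_one]
      · have := pow_orderOf_eq_one a
        rwa [hordall a ha, hp2, pow_two] at this
    have hinv : ∀ a : G, a⁻¹ = a := fun a => inv_eq_of_mul_eq_one_right (hsq a)
    have hcomm : ∀ a b : G, a * b = b * a := by
      intro a b
      calc a * b = (a * b)⁻¹ := (hinv (a * b)).symm
        _ = b⁻¹ * a⁻¹ := mul_inv_rev a b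
        _ = b * a := by rw [hinv, hinv]
    have htriv : ∀ a b : G, IsConj a b → a = b := by
      intro a b hab
      obtain ⟨c, hc⟩ := isConj_iff.mp hab
      rw [← hc, hcomm c a, mul_assoc, mul_inv_cancel, mul_one]
    obtain ⟨a, b, c, hab, hac, hbc⟩ := hcard
    by_cases ha : a = 1
    · have hb : b ≠ 1 := fun hh => hab (ha.trans hh.symm)
      have hc' : c ≠ 1 := fun hh => hac (ha.trans hh.symm)
      exact hbc (htriv b c (hconj b c hb hc'))
    · by_cases hb : b = 1
      · have hc' : c ≠ 1 := fun hh => hbc (hb.trans hh.symm)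
        exact hac (htriv a c (hconj a c ha hc'))
      · exact hab (htriv a b (hconj a b ha hb))
  · -- p odd: x conjugate to x², iterate to get x = x^(2^p), contradict Fermat
    have hx2 : x ^ 2 ≠ 1 := by
      intro hh
      have : p ∣ 2 := hxp ▸ orderOf_dvd_of_pow_eq_one hh
      exact hp2 ((Nat.prime_dvd_prime_iff_eq hp Nat.prime_two).mp this)
    obtain ⟨c, hc⟩ := isConj_iff.mp (hconj x (x ^ 2) hx1 hx2)
    have hcne : c ≠ 1 := by
      intro hh
      rw [hh, one_mul, inv_one, mul_one] at hc
      have h3 : x * 1 = x * x := by rw [mul_one, ← pow_two]; exact hc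
      exact hx1 (mul_left_cancel h3).symm
    have hcp : c ^ p = 1 := by
      rw [← hordall c hcne]; exact pow_orderOf_eq_one c
    have key : ∀ k : ℕ, c ^ k * x * (c ^ k)⁻¹ = x ^ 2 ^ k := by
      intro k
      induction k with
      | zero => simp
      | succ n ih =>
        have h1 : c ^ (n + 1) * x * (c ^ (n + 1))⁻¹
            = c * (c ^ n * x * (c ^ n)⁻¹) * c⁻¹ := by group
        rw [h1, ih, ← conj_pow, hc, ← pow_mul]
        congr 1
        ring
    have hfix : x = x ^ 2 ^ p := by
      have := key p
      rwa [hcp, one_mul, inv_one, mul_one] at this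
    have hdvd2 : p ∣ 2 ^ p - 1 := by
      have h2 : x ^ (2 ^ p - 1) * x = x := by
        rw [← pow_succ, Nat.sub_add_cancel Nat.one_le_two_pow, ← hfix]
      have hpow : x ^ (2 ^ p - 1) = 1 :=
        calc x ^ (2 ^ p - 1) = x ^ (2 ^ p - 1) * x * x⁻¹ := by group
        _ = x * x⁻¹ := by rw [h2]
        _ = 1 := mul_inv_cancel x
      have := orderOf_dvd_of_pow_eq_one hpow
      rwa [hxp] at this
    haveI : Fact p.Prime := ⟨hp⟩
    have hzero : ((2 ^ p - 1 : ℕ) : ZMod p) = 0 :=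
      (ZMod.natCast_eq_zero_iff _ _).mpr hdvd2
    rw [Nat.cast_sub Nat.one_le_two_pow, Nat.cast_pow, Nat.cast_ofNat,
      ZMod.pow_card, Nat.cast_one, sub_eq_zero] at hzero
    have : (1 : ZMod p) = 0 := by linear_combination hzero
    exact one_ne_zero this
end

section
/- Let N ⊴ Q where N has exactly two conjugacy classes and every element of Q is conjugate in Q to an element of a subgroup H ≤ Q with H ∩ N = M ≤ N, Q = H·N, and the conjugation action of H on M preserves the conjugacy classes of M. Then every non-trivial element of N is conjugate by an element of N to any other non-trivial element of M; in particular, if every g ∈ N is Q-conjugate into M and M has exactly two conjugacy classes, then N has exactly two conjugacy classes. -/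
lemma two_classes_isConj {G : Type*} [Group G]
    (h : Nat.card (ConjClasses G) = 2) {a b : G} (ha : a ≠ 1) (hb : b ≠ 1) :
    IsConj a b := by
  obtain ⟨x, y, hxy, hcov⟩ := Nat.card_eq_two_iff.mp h
  have mem : ∀ c : ConjClasses G, c = x ∨ c = y := by
    intro c
    have : c ∈ ({x, y} : Set (ConjClasses G)) := hcov ▸ Set.mem_univ c
    simpa using this
  have h1 : ConjClasses.mk a ≠ ConjClasses.mk (1 : G) := by
    simp only [ne_eq, ConjClasses.mk_eq_mk_iff_isConj]
    exact fun hc => ha (isConj_one_left.mp hc)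
  have h2 : ConjClasses.mk b ≠ ConjClasses.mk (1 : G) := by
    simp only [ne_eq, ConjClasses.mk_eq_mk_iff_isConj]
    exact fun hc => hb (isConj_one_left.mp hc)
  rw [← ConjClasses.mk_eq_mk_iff_isConj]
  rcases mem (ConjClasses.mk a) with hA | hA <;>
      rcases mem (ConjClasses.mk b) with hB | hB
  · exact hA.trans hB.symm
  · rcases mem (ConjClasses.mk 1) with hO | hO
    · exact absurd (hA.trans hO.symm) h1
    · exact absurd (hB.trans hO.symm) h2
  · rcases mem (ConjClasses.mk 1) with hO | hO
    · exact absurd (hB.trans hO.symm) h2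
    · exact absurd (hA.trans hO.symm) h1
  · exact hA.trans hB.symm

/-- Let `N ⊴ Q`, let `H ≤ Q` with `M = H ⊓ N`, `Q = H·N`, suppose every element
of `Q` is conjugate in `Q` to an element of `H`, the conjugation action of `H`
on `M` preserves the conjugacy classes of `M`, and `M` has exactly two
conjugacy classes.  Then every non-trivial element of `N` is conjugate by an
element of `N` to any non-trivial element of `M`; in particular `N` has exactly
two conjugacy classes. -/
theorem subgroup_two_conjugacy_classes
    (Q : Type*) [Group Q] (N H : Subgroup Q) [N.Normal]
    (M : Subgroup Q) (hM : M = H ⊓ N)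
    (hQ : ∀ q : Q, ∃ h ∈ H, ∃ x ∈ N, q = h * x)
    (hconjH : ∀ q : Q, ∃ h ∈ H, IsConj q h)
    (hpres : ∀ h ∈ H, ∀ z ∈ M, ∃ r ∈ M, h * z * h⁻¹ = r * z * r⁻¹)
    (hMcc : Nat.card (ConjClasses ↥M) = 2) :
    (∀ g ∈ N, g ≠ 1 → ∀ z ∈ M, z ≠ 1 → ∃ v ∈ N, v * g * v⁻¹ = z) ∧
      Nat.card (ConjClasses ↥N) = 2 := by
  have hMN : M ≤ N := hM ▸ inf_le_right
  have hMH : M ≤ H := hM ▸ inf_le_left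
  have key : ∀ g ∈ N, g ≠ 1 → ∀ z ∈ M, z ≠ 1 → ∃ v ∈ N, v * g * v⁻¹ = z := by
    intro g hg hg1 z hz hz1
    obtain ⟨m, hmH, hconj⟩ := hconjH g
    obtain ⟨u, hu⟩ := isConj_iff.mp hconj
    have hmN : m ∈ N := hu ▸ Subgroup.Normal.conj_mem ‹N.Normal› g hg u
    have hmM : m ∈ M := hM ▸ ⟨hmH, hmN⟩
    obtain ⟨h₀, hh₀, x, hx, hux⟩ := hQ u
    obtain ⟨r, hrM, hr⟩ := hpres h₀⁻¹ (H.inv_mem hh₀) m hmM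
    -- hr : h₀⁻¹ * m * (h₀⁻¹)⁻¹ = r * m * r⁻¹
    have hm1 : m ≠ 1 := by
      intro hm
      apply hg1
      have := hu
      rw [hm] at this
      have : g = u⁻¹ * 1 * u := by
        rw [← this]; group
      simpa using this
    have hxg : (r⁻¹ * x) * g * (r⁻¹ * x)⁻¹ = m := by
      have h1 : x * g * x⁻¹ = h₀⁻¹ * m * h₀ := by
        rw [hux] at hu
        have : h₀⁻¹ * (h₀ * x * g * (h₀ * x)⁻¹) * h₀ = h₀⁻¹ * m * h₀ := by
          rw [hu]
        rw [← this]; group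
      have h2 : h₀⁻¹ * m * h₀ = r * m * r⁻¹ := by
        have := hr; group at this ⊢; simpa using this
      rw [mul_inv_rev, inv_inv]
      calc r⁻¹ * x * g * (x⁻¹ * r) = r⁻¹ * (x * g * x⁻¹) * r := by group
        _ = r⁻¹ * (r * m * r⁻¹) * r := by rw [h1, h2]
        _ = m := by group
    -- now conjugate m to z inside M
    have hconjM : IsConj (⟨m, hmM⟩ : ↥M) ⟨z, hz⟩ := by
      apply two_classes_isConj hMcc
      · exact fun hc => hm1 (by simpa using congrArg Subtype.val hc)
      · exact fun hc => hz1 (by simpa using congrArg Subtype.val hc)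
    obtain ⟨c, hc⟩ := isConj_iff.mp hconjM
    have hc' : (c : Q) * m * (c : Q)⁻¹ = z := by
      have := congrArg Subtype.val hc
      push_cast at this
      simpa using this
    refine ⟨(c : Q) * (r⁻¹ * x), ?_, ?_⟩
    · exact N.mul_mem (hMN c.2) (N.mul_mem (N.inv_mem (hMN hrM)) hx)
    · calc (c : Q) * (r⁻¹ * x) * g * ((c : Q) * (r⁻¹ * x))⁻¹
          = (c : Q) * ((r⁻¹ * x) * g * (r⁻¹ * x)⁻¹) * (c : Q)⁻¹ := by group
        _ = (c : Q) * m * (c : Q)⁻¹ := by rw [hxg]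
        _ = z := hc'
  refine ⟨key, ?_⟩
  -- get a non-trivial element of M
  obtain ⟨z0, hz0ne⟩ : ∃ z0 : ↥M, z0 ≠ 1 := by
    obtain ⟨x, y, hxy, hcov⟩ := Nat.card_eq_two_iff.mp hMcc
    obtain ⟨a, ha⟩ := ConjClasses.exists_rep x
    obtain ⟨b, hb⟩ := ConjClasses.exists_rep y
    by_contra hcon
    push_neg at hcon
    exact hxy (by rw [← ha, ← hb, hcon a, hcon b])
  set z : Q := (z0 : Q) with hzdef
  have hzM : z ∈ M := z0.2
  have hz1 : z ≠ 1 := fun h => hz0ne (Subtype.ext h)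
  rw [Nat.card_eq_two_iff]
  refine ⟨ConjClasses.mk (1 : ↥N), ConjClasses.mk (⟨z, hMN hzM⟩ : ↥N), ?_, ?_⟩
  · simp only [ne_eq, ConjClasses.mk_eq_mk_iff_isConj]
    intro hc
    exact hz1 (by simpa using congrArg Subtype.val (isConj_one_right.mp hc))
  · apply Set.eq_univ_of_forall
    intro cl
    obtain ⟨g, hg⟩ := ConjClasses.exists_rep cl
    simp only [Set.mem_insert_iff, Set.mem_singleton_iff]
    by_cases hg1 : g = 1
    · left; rw [← hg, hg1]
    · right
      rw [← hg, ConjClasses.mk_eq_mk_iff_isConj]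
      obtain ⟨v, hvN, hv⟩ := key (g : Q) g.2
        (fun h => hg1 (Subtype.ext h)) z hzM hz1
      exact isConj_iff.mpr ⟨⟨v, hvN⟩, Subtype.ext (by push_cast; exact hv)⟩
end
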